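/- arXiv:1703.04948 — 4 statements merged into one kernel-verified Lean document; each statement's English description precedes it below -/
import Mathlib

section
/- Let Φ = A ⊕ C (i.e. Φ(x,z) = (Ax, Cz)) be a Lie algebra isomorphism N_{r,s}(U) → N_{r̃,s̃}(Ũ). Then A^τ J̃_w A = J_{C^τ(w)} for all w ∈ ℝ^{r̃,s̃}, where A^τ and C^τ are the adjoints with respect to the scalar products ⟨·,·⟩_U, ⟨·,·⟩_Ũ and ⟨·,·⟩_{r,s}, ⟨·,·⟩_{r̃,s̃}. -/
/-!
Pair both sides of the claimed identity with an arbitrary `y ∈ U`: moving `A^τ` across the form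
and using the defining relation of `J̃`, the homomorphism property `[Ax, Ay]~ = C[x, y]`,
the adjoint `C^τ` and the defining relation of `J` gives
`⟨A^τ J̃_w A x, y⟩ = ⟨J̃_w A x, A y⟩ = ⟨w, C[x, y]⟩ = ⟨C^τ w, [x, y]⟩ = ⟨J_{C^τ w} x, y⟩`,
and nondegeneracy of `⟨·,·⟩_U` finishes the proof.
-/

namespace LinearMap

variable {R M M₁ : Type*} [CommSemiring R] [AddCommMonoid M] [Module R M]
  [AddCommMonoid M₁] [Module R M₁] {B : M →ₗ[R] M →ₗ[R] R} {B' : M₁ →ₗ[R] M₁ →ₗ[R] R}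
  {f : M → M₁} {g : M₁ → M}

theorem IsAdjointPair.swap (hB : ∀ x y, B x y = B y x) (hB' : ∀ x y, B' x y = B' y x)
    (h : IsAdjointPair B B' f g) : IsAdjointPair B' B g f := fun x y => by
  rw [hB, ← h, hB']

end LinearMap

theorem stmt_7_general {Z U Z' U' : Type*}
    [AddCommGroup Z] [Module ℝ Z] [AddCommGroup U] [Module ℝ U]
    [AddCommGroup Z'] [Module ℝ Z'] [AddCommGroup U'] [Module ℝ U']
    (gZ : Z →ₗ[ℝ] Z →ₗ[ℝ] ℝ) (gZ' : Z' →ₗ[ℝ] Z' →ₗ[ℝ] ℝ)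
    (gZsymm : ∀ z w : Z, gZ z w = gZ w z)
    (gZ'symm : ∀ z w : Z', gZ' z w = gZ' w z)
    (BU : U →ₗ[ℝ] U →ₗ[ℝ] ℝ) (BU' : U' →ₗ[ℝ] U' →ₗ[ℝ] ℝ)
    (hndU : ∀ x : U, (∀ y : U, BU x y = 0) → x = 0)
    (hsymmU : ∀ x y : U, BU x y = BU y x)
    (hsymmU' : ∀ x y : U', BU' x y = BU' y x)
    (J : Z →ₗ[ℝ] Module.End ℝ U) (J' : Z' →ₗ[ℝ] Module.End ℝ U')
    (br : U →ₗ[ℝ] U →ₗ[ℝ] Z) (br' : U' →ₗ[ℝ] U' →ₗ[ℝ] Z')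
    (hbr : ∀ (z : Z) (x y : U), BU (J z x) y = gZ z (br x y))
    (hbr' : ∀ (w : Z') (x y : U'), BU' (J' w x) y = gZ' w (br' x y))
    (A : U →ₗ[ℝ] U') (C : Z →ₗ[ℝ] Z')
    (hhom : ∀ x y : U, br' (A x) (A y) = C (br x y))
    (Aτ : U' →ₗ[ℝ] U) (hAτ : ∀ (x : U) (y' : U'), BU' (A x) y' = BU x (Aτ y'))
    (Cτ : Z' →ₗ[ℝ] Z) (hCτ : ∀ (z : Z) (w' : Z'), gZ' (C z) w' = gZ z (Cτ w')) :
    ∀ (w : Z') (x : U), Aτ (J' w (A x)) = J (Cτ w) x := by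
  intro w x
  have hBU_injective : Function.Injective BU :=
    LinearMap.ker_eq_bot.mp (LinearMap.separatingLeft_iff_ker_eq_bot.mp hndU)
  refine hBU_injective (LinearMap.ext fun y => ?_)
  calc BU (Aτ (J' w (A x))) y
      = BU' (J' w (A x)) (A y) := LinearMap.IsAdjointPair.swap hsymmU hsymmU' hAτ _ _
    _ = gZ' w (C (br x y)) := by rw [hbr', hhom]
    _ = gZ (Cτ w) (br x y) := (LinearMap.IsAdjointPair.swap gZsymm gZ'symm hCτ _ _).symm
    _ = BU (J (Cτ w) x) y := (hbr _ _ _).symm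

/-- If `Φ = A ⊕ C` (`Φ(x,z) = (Ax,Cz)`) is a Lie algebra isomorphism
`N_{r,s}(U) → N_{r̃,s̃}(Ũ)`, then `A^τ J̃_w A = J_{C^τ(w)}` for all `w ∈ ℝ^{r̃,s̃}`,
where `A^τ, C^τ` are the adjoints with respect to the scalar products.  The brackets are
determined by `⟨J_z x,y⟩_U = ⟨z,[x,y]⟩_{r,s}` and `Φ` being a Lie homomorphism means
`[Ax,Ay]~ = C[x,y]`. -/
theorem stmt_7 {Z U Z' U' : Type*}
    [AddCommGroup Z] [Module ℝ Z] [AddCommGroup U] [Module ℝ U]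
    [AddCommGroup Z'] [Module ℝ Z'] [AddCommGroup U'] [Module ℝ U']
    (gZ : Z →ₗ[ℝ] Z →ₗ[ℝ] ℝ) (gZ' : Z' →ₗ[ℝ] Z' →ₗ[ℝ] ℝ)
    (gZsymm : ∀ z w : Z, gZ z w = gZ w z)
    (gZ'symm : ∀ z w : Z', gZ' z w = gZ' w z)
    (BU : U →ₗ[ℝ] U →ₗ[ℝ] ℝ) (BU' : U' →ₗ[ℝ] U' →ₗ[ℝ] ℝ)
    (hndU : ∀ x : U, (∀ y : U, BU x y = 0) → x = 0)
    (hsymmU : ∀ x y : U, BU x y = BU y x)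
    (hsymmU' : ∀ x y : U', BU' x y = BU' y x)
    (J : Z →ₗ[ℝ] Module.End ℝ U) (J' : Z' →ₗ[ℝ] Module.End ℝ U')
    (br : U →ₗ[ℝ] U →ₗ[ℝ] Z) (br' : U' →ₗ[ℝ] U' →ₗ[ℝ] Z')
    (hbr : ∀ (z : Z) (x y : U), BU (J z x) y = gZ z (br x y))
    (hbr' : ∀ (w : Z') (x y : U'), BU' (J' w x) y = gZ' w (br' x y))
    (A : U →ₗ[ℝ] U') (C : Z →ₗ[ℝ] Z')
    (hA : Function.Bijective A) (hC : Function.Bijective C)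
    (hhom : ∀ x y : U, br' (A x) (A y) = C (br x y))
    (Aτ : U' →ₗ[ℝ] U) (hAτ : ∀ (x : U) (y' : U'), BU' (A x) y' = BU x (Aτ y'))
    (Cτ : Z' →ₗ[ℝ] Z) (hCτ : ∀ (z : Z) (w' : Z'), gZ' (C z) w' = gZ z (Cτ w')) :
    ∀ (w : Z') (x : U), Aτ (J' w (A x)) = J (Cτ w) x :=
  stmt_7_general gZ gZ' gZsymm gZ'symm BU BU' hndU hsymmU hsymmU' J J' br br' hbr hbr' A C hhom Aτ
    hAτ Cτ hCτ
end

section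
/- Let φ = x₁⋯x_{2p}·y₁⋯y_q ∈ Spin(r)×Pin(s) ⊂ Pin(r,s) act on an admissible Cl(r,s)-module U. Then the pair (J_{φ^{-1}}, (Ãd_φ)^τ) is a restricted automorphism of N_{r,s}(U): it satisfies (J_{φ^{-1}})^τ J_z J_{φ^{-1}} = J_{(Ãd_φ)(z)} for all z ∈ ℝ^{r,s}, where Ãd_φ(z) = α(φ) z φ^{-1} is the twisted adjoint action. -/
/-!
Once the generators `ι z` act skew-adjointly, `ρ (star a)` is the adjoint of `ρ a` for every
`a`, where `star = reverse ∘ involute` is Clifford conjugation. For `φ` a product of unit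
vectors, `φ * reverse φ` is the product of their `Q`-values, which is `1` because the
vectors with `Q = -1` come in even number; so `φ⁻¹ = reverse φ`. Hence the adjoint of
`ρ φ⁻¹` is `ρ (involute φ)` and the adjoint of `ρ (involute φ)` is `ρ φ⁻¹`, which gives
both identities.
-/

open CliffordAlgebra

namespace CliffordAlgebra

variable {R M : Type*} [CommRing R] [AddCommGroup M] [Module R M] {Q : QuadraticForm R M}

theorem prod_map_ι_mul_reverse (l : List M) :
    (l.map (ι Q)).prod * reverse (l.map (ι Q)).prod = algebraMap R _ (l.map Q).prod := by
  rw [reverse_prod_map_ι]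
  induction l with
  | nil => simp
  | cons v l ih =>
    simp only [List.map_cons, List.prod_cons, List.reverse_cons, List.prod_append,
      List.prod_nil, mul_one, map_mul]
    rw [mul_assoc, ← mul_assoc _ _ (ι Q v), ih, Algebra.commutes _ (ι Q v), ← mul_assoc,
      ι_sq_scalar, ← map_mul]

theorem isAdjointPair_star {U : Type*} [AddCommGroup U] [Module R U]
    (ρ : CliffordAlgebra Q →ₐ[R] Module.End R U) (B : U →ₗ[R] U →ₗ[R] R)
    (hskew : ∀ (z : M) (x y : U), B (ρ (ι Q z) x) y + B x (ρ (ι Q z) y) = 0)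
    (a : CliffordAlgebra Q) : LinearMap.IsAdjointPair B B (ρ a) (ρ (star a)) := by
  induction a using CliffordAlgebra.induction with
  | algebraMap r =>
    rw [star_algebraMap, AlgHom.commutes, Algebra.algebraMap_eq_smul_one]
    exact LinearMap.isAdjointPair_one.smul r
  | ι z =>
    intro x y
    rw [star_ι, map_neg, LinearMap.neg_apply, map_neg]
    exact eq_neg_of_add_eq_zero_left (hskew z x y)
  | mul a b ha hb =>
    rw [star_mul, map_mul, map_mul]
    exact ha.mul hb
  | add a b ha hb =>
    rw [star_add, map_add, map_add]
    exact ha.add hb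

end CliffordAlgebra

theorem stmt_14_general {Z U : Type*} [AddCommGroup Z] [Module ℝ Z]
    [AddCommGroup U] [Module ℝ U]
    (g : Z →ₗ[ℝ] Z →ₗ[ℝ] ℝ)
    (Q : QuadraticForm ℝ Z) (hQ : ∀ z : Z, Q z = - g z z)
    (ρ : CliffordAlgebra Q →ₐ[ℝ] Module.End ℝ U)
    (B : U →ₗ[ℝ] U →ₗ[ℝ] ℝ)
    (hskew : ∀ (z : Z) (x y : U), B (ρ (ι Q z) x) y + B x (ρ (ι Q z) y) = 0)
    (p : ℕ) (xs ys : List Z)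
    (hxslen : xs.length = 2 * p)
    (hxsunit : ∀ v ∈ xs, g v v = 1)
    (hysunit : ∀ v ∈ ys, g v v = -1)
    (φ : CliffordAlgebra Q)
    (hφ : φ = (xs.map (ι Q)).prod * (ys.map (ι Q)).prod)
    (φinv : CliffordAlgebra Q)
    (hφinv : φ * φinv = 1 ∧ φinv * φ = 1) :
    (∀ x y : U, B (ρ φinv x) y = B x (ρ (involute φ) y)) ∧
    (∀ z w : Z, involute φ * ι Q z * φinv = ι Q w →
      ∀ x y : U, B (ρ (ι Q z) (ρ φinv x)) (ρ φinv y) = B (ρ (ι Q w) x) y) := by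
  have hnorm : ((xs ++ ys).map Q).prod = 1 := by
    have hx : ∀ v ∈ xs, Q v = -1 := fun v hv ↦ by rw [hQ, hxsunit v hv]
    have hy : ∀ v ∈ ys, Q v = 1 := fun v hv ↦ by rw [hQ, hysunit v hv, neg_neg]
    rw [List.map_append, List.prod_append, List.prod_eq_pow_card _ (-1) (by simpa using hx),
      List.prod_eq_one (by simpa using hy), List.length_map, hxslen, pow_mul]
    norm_num
  have hφ_rev : φ * reverse φ = 1 := by
    rw [hφ, ← List.prod_append, ← List.map_append, prod_map_ι_mul_reverse, hnorm, map_one]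
  have hφinv_eq : φinv = reverse φ := by
    rw [← one_mul (reverse φ), ← hφinv.2, mul_assoc, hφ_rev, mul_one]
  have hstar_inv : star φinv = involute φ := by
    rw [hφinv_eq, star_def, ← reverse_involute, reverse_reverse]
  have hstar_involute : star (involute φ) = φinv := by
    rw [hφinv_eq, star_def, involute_involute]
  refine ⟨hstar_inv ▸ isAdjointPair_star ρ B hskew φinv, fun z w hw x y ↦ ?_⟩
  rw [← hw, map_mul, map_mul, Module.End.mul_apply, Module.End.mul_apply,
    isAdjointPair_star ρ B hskew (involute φ), hstar_involute]

/-- Let `φ = x₁⋯x_{2p}·y₁⋯y_q ∈ Spin(r)×Pin(s) ⊂ Pin(r,s)` (an even number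
of positive unit vectors, any number of negative ones) act on an admissible
`Cl(r,s)`-module `U`.  Then `(J_{φ⁻¹}, (Ãd_φ)^τ)` is a restricted automorphism of
`N_{r,s}(U)`:  `(J_{φ⁻¹})^τ J_z J_{φ⁻¹} = J_{Ãd_φ(z)}` for all `z ∈ ℝ^{r,s}`, where
`Ãd_φ(z) = α(φ) z φ⁻¹`.  Equivalently (using the adjoint with respect to `⟨·,·⟩_U`):
whenever `α(φ)·ι(z)·φ⁻¹ = ι(w)`, one has
`⟨J_z J_{φ⁻¹} x, J_{φ⁻¹} y⟩_U = ⟨J_w x, y⟩_U`, and `(J_{φ⁻¹})^τ = J_{α(φ)}`. -/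
theorem stmt_14 {Z U : Type*} [AddCommGroup Z] [Module ℝ Z]
    [AddCommGroup U] [Module ℝ U]
    (g : Z →ₗ[ℝ] Z →ₗ[ℝ] ℝ)
    (gsymm : ∀ z w : Z, g z w = g w z)
    (Q : QuadraticForm ℝ Z) (hQ : ∀ z : Z, Q z = - g z z)
    (ρ : CliffordAlgebra Q →ₐ[ℝ] Module.End ℝ U)
    (B : U →ₗ[ℝ] U →ₗ[ℝ] ℝ)
    (hnd : ∀ x : U, (∀ y : U, B x y = 0) → x = 0)
    (hsymm : ∀ x y : U, B x y = B y x)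
    (hskew : ∀ (z : Z) (x y : U), B (ρ (ι Q z) x) y + B x (ρ (ι Q z) y) = 0)
    (p : ℕ) (xs ys : List Z)
    (hxslen : xs.length = 2 * p)
    (hxsunit : ∀ v ∈ xs, g v v = 1)
    (hysunit : ∀ v ∈ ys, g v v = -1)
    (φ : CliffordAlgebra Q)
    (hφ : φ = (xs.map (ι Q)).prod * (ys.map (ι Q)).prod)
    (φinv : CliffordAlgebra Q)
    (hφinv : φ * φinv = 1 ∧ φinv * φ = 1) :
    (∀ x y : U, B (ρ φinv x) y = B x (ρ (involute φ) y)) ∧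
    (∀ z w : Z, involute φ * ι Q z * φinv = ι Q w →
      ∀ x y : U, B (ρ (ι Q z) (ρ φinv x)) (ρ φinv y) = B (ρ (ι Q w) x) y) :=
  stmt_14_general g Q hQ ρ B hskew p xs ys hxslen hxsunit hysunit φ hφ φinv hφinv
end

section
/- For a unit vector v ∈ ℝ^{r,s} with ⟨v,v⟩_{r,s} = −1 acting on an admissible Cl(r,s)-module U, the map J_v is skew-symmetric and satisfies J_v^τ = J_{α(v)} = J_{-v}, and hence (J_{v^{-1}}, (Ãd_v)^τ) is a restricted automorphism of N_{r,s}(U). In contrast, for a unit vector v with ⟨v,v⟩_{r,s} = 1 one has J_{v^{-1}}^τ = J_v ≠ J_{α(v)} (for v ≠ 0), so the corresponding pair fails the automorphism condition. -/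
/-!
In the Clifford algebra `v z v = polar(v, z) v - Q(v) z` is again a vector. Moving `J_v` across
the form with `J_v^τ = J_{-v}` therefore turns `⟨J_z J_v x, J_v y⟩` into
`⟨J_{Q(v) z - polar(v, z) v} x, y⟩`, which for `Q(v) = 1` is the reflection `Ãd_v` of `z`.
For `⟨v, v⟩ = 1`, `J_v = J_{-v}` would force `J_v = 0`, contradicting `J_v² = Q(v) = -1`
on a nonzero module.
-/

open CliffordAlgebra

section CliffordModule

variable {R M U : Type*} [CommRing R] [AddCommGroup M] [Module R M] [AddCommGroup U] [Module R U]
  {Q : QuadraticForm R M} (ρ : CliffordAlgebra Q →ₐ[R] Module.End R U)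

theorem QuadraticMap.polar_eq_neg_two_mul {g : M →ₗ[R] M →ₗ[R] R} (gsymm : ∀ z w, g z w = g w z)
    (hQ : ∀ z, Q z = -g z z) (z w : M) : QuadraticMap.polar Q z w = -(2 * g z w) := by
  simp only [QuadraticMap.polar, hQ, map_add, LinearMap.add_apply, gsymm w z]
  ring

theorem cliffordRep_ι_mul_ι_mul_ι (v z : M) (x : U) :
    ρ (ι Q v) (ρ (ι Q z) (ρ (ι Q v) x)) = ρ (ι Q (QuadraticMap.polar Q v z • v - Q v • z)) x := by
  rw [← ι_mul_ι_mul_ι, map_mul, map_mul, Module.End.mul_apply, Module.End.mul_apply]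

variable {ρ} {B : U →ₗ[R] U →ₗ[R] R}

theorem isAdjointPair_ι_ι_neg
    (hskew : ∀ (z : M) (x y : U), B (ρ (ι Q z) x) y + B x (ρ (ι Q z) y) = 0) (z : M) :
    LinearMap.IsAdjointPair B B (ρ (ι Q z)) (ρ (ι Q (-z))) := by
  intro x y
  rw [map_neg, map_neg, LinearMap.neg_apply, map_neg]
  linear_combination hskew z x y

theorem isAdjointPair_ι_neg_ι
    (hskew : ∀ (z : M) (x y : U), B (ρ (ι Q z) x) y + B x (ρ (ι Q z) y) = 0) (z : M) :
    LinearMap.IsAdjointPair B B (ρ (ι Q (-z))) (ρ (ι Q z)) := by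
  simpa using isAdjointPair_ι_ι_neg hskew (-z)

theorem apply_ι_conj_ι
    (hskew : ∀ (z : M) (x y : U), B (ρ (ι Q z) x) y + B x (ρ (ι Q z) y) = 0)
    (v z : M) (x y : U) :
    B (ρ (ι Q z) (ρ (ι Q v) x)) (ρ (ι Q v) y)
      = B (ρ (ι Q (Q v • z - QuadraticMap.polar Q v z • v)) x) y := by
  rw [← isAdjointPair_ι_neg_ι hskew, map_neg, map_neg, LinearMap.neg_apply,
    cliffordRep_ι_mul_ι_mul_ι, ← LinearMap.neg_apply, ← map_neg, ← map_neg, neg_sub]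

end CliffordModule

theorem cliffordRep_ι_ne_ι_neg {K M U : Type*} [Field K] [NeZero (2 : K)]
    [AddCommGroup M] [Module K M] [AddCommGroup U] [Module K U] [Nontrivial U] {Q : QuadraticForm K M}
    (ρ : CliffordAlgebra Q →ₐ[K] Module.End K U) {v : M} (hv : Q v ≠ 0) :
    ρ (ι Q v) ≠ ρ (ι Q (-v)) := by
  intro h
  rw [map_neg, map_neg, eq_neg_iff_add_eq_zero, ← two_smul K, smul_eq_zero] at h
  replace h := h.resolve_left two_ne_zero
  obtain ⟨x, hx⟩ := exists_ne (0 : U)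
  have hsq : ρ (ι Q v) (ρ (ι Q v) x) = Q v • x := by
    rw [← Module.End.mul_apply, ← map_mul, ι_sq_scalar, AlgHom.commutes,
      Module.algebraMap_end_apply]
  rw [h, LinearMap.zero_apply, eq_comm, smul_eq_zero] at hsq
  exact hsq.elim hv hx

theorem stmt_15_general {Z U : Type*} [AddCommGroup Z] [Module ℝ Z]
    [AddCommGroup U] [Module ℝ U] [Nontrivial U]
    (g : Z →ₗ[ℝ] Z →ₗ[ℝ] ℝ)
    (gsymm : ∀ z w : Z, g z w = g w z)
    (Q : QuadraticForm ℝ Z) (hQ : ∀ z : Z, Q z = - g z z)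
    (ρ : CliffordAlgebra Q →ₐ[ℝ] Module.End ℝ U)
    (B : U →ₗ[ℝ] U →ₗ[ℝ] ℝ)
    (hskew : ∀ (z : Z) (x y : U), B (ρ (ι Q z) x) y + B x (ρ (ι Q z) y) = 0) :
    (∀ v : Z, g v v = -1 →
      -- J_v is skew-symmetric
      (∀ x y : U, B (ρ (ι Q v) x) y + B x (ρ (ι Q v) y) = 0) ∧
      -- J_v^τ = J_{α(v)} = J_{-v}
      (∀ x y : U, B (ρ (ι Q v) x) y = B x (ρ (ι Q (-v)) y)) ∧
      -- (J_{v⁻¹}, (Ãd_v)^τ) is a restricted automorphism (here v⁻¹ = v)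
      (∀ (z : Z) (x y : U),
        B (ρ (ι Q z) (ρ (ι Q v) x)) (ρ (ι Q v) y)
          = B (ρ (ι Q (z - (2 * (g z v / g v v)) • v)) x) y)) ∧
    (∀ v : Z, g v v = 1 →
      -- J_{v⁻¹}^τ = J_v  (here v⁻¹ = −v)
      (∀ x y : U, B (ρ (ι Q (-v)) x) y = B x (ρ (ι Q v) y)) ∧
      -- but J_v ≠ J_{α(v)} for v ≠ 0
      (v ≠ 0 → ρ (ι Q v) ≠ ρ (ι Q (-v)))) := by
  refine ⟨fun v hv ↦ ⟨hskew v, isAdjointPair_ι_ι_neg hskew v, fun z x y ↦ ?_⟩,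
    fun v hv ↦ ⟨isAdjointPair_ι_neg_ι hskew v, fun _ ↦ cliffordRep_ι_ne_ι_neg ρ ?_⟩⟩
  · have hreflect : z - (2 * (g z v / g v v)) • v = Q v • z - QuadraticMap.polar Q v z • v := by
      rw [hQ, hv, QuadraticMap.polar_eq_neg_two_mul gsymm hQ, gsymm v z]
      module
    rw [apply_ι_conj_ι hskew, hreflect]
  · rw [hQ, hv]
    norm_num

/-- For a unit vector `v ∈ ℝ^{r,s}` with `⟨v,v⟩_{r,s} = −1` acting on an
admissible `Cl(r,s)`-module `U` (then `v⁻¹ = v`), `J_v` is skew-symmetric, its adjoint is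
`J_v^τ = J_{α(v)} = J_{−v}`, and `(J_{v⁻¹}, (Ãd_v)^τ)` is a restricted automorphism of
`N_{r,s}(U)`: `⟨J_z J_v x, J_v y⟩_U = ⟨J_{Ãd_v(z)} x, y⟩_U` with
`Ãd_v(z) = z − 2(⟨z,v⟩/⟨v,v⟩)v`.  In contrast, for `⟨v,v⟩_{r,s} = 1` (then `v⁻¹ = −v`)
one has `J_{v⁻¹}^τ = J_v ≠ J_{α(v)}` when `v ≠ 0`.  (Clifford convention:
`Q z = −⟨z,z⟩_{r,s}`.) -/
theorem stmt_15 {Z U : Type*} [AddCommGroup Z] [Module ℝ Z]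
    [AddCommGroup U] [Module ℝ U] [Nontrivial U]
    (g : Z →ₗ[ℝ] Z →ₗ[ℝ] ℝ)
    (gsymm : ∀ z w : Z, g z w = g w z)
    (Q : QuadraticForm ℝ Z) (hQ : ∀ z : Z, Q z = - g z z)
    (ρ : CliffordAlgebra Q →ₐ[ℝ] Module.End ℝ U)
    (B : U →ₗ[ℝ] U →ₗ[ℝ] ℝ)
    (hnd : ∀ x : U, (∀ y : U, B x y = 0) → x = 0)
    (hsymm : ∀ x y : U, B x y = B y x)
    (hskew : ∀ (z : Z) (x y : U), B (ρ (ι Q z) x) y + B x (ρ (ι Q z) y) = 0) :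
    (∀ v : Z, g v v = -1 →
      -- J_v is skew-symmetric
      (∀ x y : U, B (ρ (ι Q v) x) y + B x (ρ (ι Q v) y) = 0) ∧
      -- J_v^τ = J_{α(v)} = J_{-v}
      (∀ x y : U, B (ρ (ι Q v) x) y = B x (ρ (ι Q (-v)) y)) ∧
      -- (J_{v⁻¹}, (Ãd_v)^τ) is a restricted automorphism (here v⁻¹ = v)
      (∀ (z : Z) (x y : U),
        B (ρ (ι Q z) (ρ (ι Q v) x)) (ρ (ι Q v) y)
          = B (ρ (ι Q (z - (2 * (g z v / g v v)) • v)) x) y)) ∧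
    (∀ v : Z, g v v = 1 →
      -- J_{v⁻¹}^τ = J_v  (here v⁻¹ = −v)
      (∀ x y : U, B (ρ (ι Q (-v)) x) y = B x (ρ (ι Q v) y)) ∧
      -- but J_v ≠ J_{α(v)} for v ≠ 0
      (v ≠ 0 → ρ (ι Q v) ≠ ρ (ι Q (-v)))) :=
  stmt_15_general g gsymm Q hQ ρ B hskew
end

section
/- Let (V, ⟨·,·⟩_V) be a module with nondegenerate symmetric bilinear form and let Λ₁,…,Λ_l be symmetric linear operators on V satisfying Λ_k² = −Id and Λ_k Λ_j = −Λ_j Λ_k for k ≠ j. Then for any w ∈ V with ⟨w,w⟩_V = 1 there exists w̃ ∈ V with ⟨w̃,w̃⟩_V = 1 and ⟨w̃, Λ_k w̃⟩_V = 0 for all k = 1,…,l. -/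
/-!
Rotate one operator at a time. For a symmetric `Λ` with `Λ² = -1` and `v = x u + y Λ u`, the
values `B v v` and `B v (Λ v)` depend only on `x² - y²` and `2xy`, which (being the real and
imaginary parts of `(x + iy)²`) can be prescribed arbitrarily; this makes `v` a unit vector with
`B v (Λ v) = 0`. For an operator `M` anticommuting with `Λ`, `B v (M v) = (x² + y²) B u (M u)`,
so the conditions already achieved for the other operators survive the rotation.
-/

theorem exists_sq_sub_sq_eq_and_two_mul_eq (p q : ℝ) :
    ∃ x y : ℝ, x ^ 2 - y ^ 2 = p ∧ 2 * x * y = q := by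
  obtain ⟨z, hz⟩ := IsAlgClosed.exists_pow_nat_eq (⟨p, q⟩ : ℂ) two_pos
  refine ⟨z.re, z.im, ?_, ?_⟩
  · simpa [sq] using congr_arg Complex.re hz
  · have him := congr_arg Complex.im hz
    simp only [sq, Complex.mul_im] at him
    linarith

namespace Module.End

variable {R V : Type*} [CommRing R] [AddCommGroup V] [Module R V]

def rotate (Λ : End R V) (x y : R) (u : V) : V := x • u + y • Λ u

variable {B : LinearMap.BilinForm R V} {Λ : End R V}

theorem apply_apply_of_mul_self_eq_neg_one (hΛ : Λ * Λ = -1) (u : V) : Λ (Λ u) = -u := by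
  simpa using LinearMap.congr_fun hΛ u

theorem bilin_apply_apply_of_mul_self_eq_neg_one (hsa : B.IsSelfAdjoint Λ) (hΛ : Λ * Λ = -1)
    (u v : V) : B (Λ u) (Λ v) = -B u v := by
  rw [hsa, apply_apply_of_mul_self_eq_neg_one hΛ, map_neg]

theorem bilin_rotate_rotate (hsa : B.IsSelfAdjoint Λ) (hΛ : Λ * Λ = -1) (x y : R) (u : V) :
    B (Λ.rotate x y u) (Λ.rotate x y u) =
      (x ^ 2 - y ^ 2) * B u u + 2 * x * y * B u (Λ u) := by
  simp only [rotate, map_add, map_smul, LinearMap.add_apply, LinearMap.smul_apply, smul_eq_mul,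
    bilin_apply_apply_of_mul_self_eq_neg_one hsa hΛ, hsa u u]
  ring

theorem bilin_rotate_apply_rotate (hsa : B.IsSelfAdjoint Λ) (hΛ : Λ * Λ = -1) (x y : R)
    (u : V) :
    B (Λ.rotate x y u) (Λ (Λ.rotate x y u)) =
      (x ^ 2 - y ^ 2) * B u (Λ u) - 2 * x * y * B u u := by
  simp only [rotate, map_add, map_smul, apply_apply_of_mul_self_eq_neg_one hΛ, map_neg,
    LinearMap.add_apply, LinearMap.smul_apply, smul_eq_mul,
    bilin_apply_apply_of_mul_self_eq_neg_one hsa hΛ, hsa u u]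
  ring

theorem bilin_rotate_apply_rotate_of_anticomm (hsa : B.IsSelfAdjoint Λ) (hΛ : Λ * Λ = -1)
    {M : End R V} (hM : Λ * M = -(M * Λ)) (x y : R) (u : V) :
    B (Λ.rotate x y u) (M (Λ.rotate x y u)) = (x ^ 2 + y ^ 2) * B u (M u) := by
  have hcomm (v : V) : Λ (M v) = -M (Λ v) := by simpa using LinearMap.congr_fun hM v
  have hcross : B (Λ u) (M u) = -B u (M (Λ u)) := by rw [hsa, hcomm, map_neg]
  have hdiag : B (Λ u) (M (Λ u)) = B u (M u) := by
    rw [hsa, hcomm, apply_apply_of_mul_self_eq_neg_one hΛ, map_neg, map_neg, map_neg, neg_neg]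
  simp only [rotate, map_add, map_smul, LinearMap.add_apply, LinearMap.smul_apply, smul_eq_mul,
    hcross, hdiag]
  ring

end Module.End

section Real

open Module.End

variable {V : Type*} [AddCommGroup V] [Module ℝ V] {B : LinearMap.BilinForm ℝ V}

theorem exists_rotate_unit_and_bilin_apply_self_eq_zero {Λ : Module.End ℝ V}
    (hsa : B.IsSelfAdjoint Λ) (hΛ : Λ * Λ = -1) {u : V} (hu : B u u = 1) :
    ∃ x y : ℝ, B (Λ.rotate x y u) (Λ.rotate x y u) = 1 ∧
      B (Λ.rotate x y u) (Λ (Λ.rotate x y u)) = 0 := by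
  set a := B u (Λ u)
  have ha : 1 + a ^ 2 ≠ 0 := by positivity
  obtain ⟨x, y, hp, hq⟩ :=
    exists_sq_sub_sq_eq_and_two_mul_eq (1 / (1 + a ^ 2)) (a / (1 + a ^ 2))
  refine ⟨x, y, ?_, ?_⟩
  · rw [bilin_rotate_rotate hsa hΛ, hp, hq, hu]
    field_simp
    ring
  · rw [bilin_rotate_apply_rotate hsa hΛ, hp, hq, hu]
    field_simp
    ring

theorem exists_unit_forall_mem_bilin_apply_eq_zero {ι : Type*} {Λ : ι → Module.End ℝ V}
    (hsa : ∀ k, B.IsSelfAdjoint (Λ k)) (hsq : ∀ k, Λ k * Λ k = -1)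
    (hanti : ∀ k j, k ≠ j → Λ k * Λ j = -(Λ j * Λ k)) {w : V} (hw : B w w = 1)
    (S : Finset ι) :
    ∃ u : V, B u u = 1 ∧ ∀ k ∈ S, B u (Λ k u) = 0 := by
  classical
  induction S using Finset.induction_on with
  | empty => exact ⟨w, hw, by simp⟩
  | @insert k S hkS ih =>
    obtain ⟨u, hu, hS⟩ := ih
    obtain ⟨x, y, hunit, hk⟩ :=
      exists_rotate_unit_and_bilin_apply_self_eq_zero (hsa k) (hsq k) hu
    refine ⟨(Λ k).rotate x y u, hunit, ?_⟩
    intro j hj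
    rcases Finset.mem_insert.mp hj with rfl | hjS
    · exact hk
    · have hkj : k ≠ j := fun h => hkS (h ▸ hjS)
      rw [bilin_rotate_apply_rotate_of_anticomm (hsa k) (hsq k) (hanti k j hkj), hS j hjS,
        mul_zero]

end Real

theorem stmt_16_general {V : Type*} [AddCommGroup V] [Module ℝ V]
    (B : V →ₗ[ℝ] V →ₗ[ℝ] ℝ)
    (l : ℕ) (Λ : Fin l → Module.End ℝ V)
    (hΛsym : ∀ (k : Fin l) (x y : V), B (Λ k x) y = B x (Λ k y))
    (hΛsq : ∀ k : Fin l, Λ k * Λ k = -1)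
    (hΛanti : ∀ k j : Fin l, k ≠ j → Λ k * Λ j = -(Λ j * Λ k))
    (w : V) (hw : B w w = 1) :
    ∃ w' : V, B w' w' = 1 ∧ ∀ k : Fin l, B w' (Λ k w') = 0 := by
  obtain ⟨u, hu, h⟩ :=
    exists_unit_forall_mem_bilin_apply_eq_zero hΛsym hΛsq hΛanti hw Finset.univ
  exact ⟨u, hu, fun k => h k (Finset.mem_univ k)⟩

/-- Let `(V,⟨·,·⟩_V)` be a (finite-dimensional real) space with nondegenerate
symmetric bilinear form and `Λ₁,…,Λ_l` symmetric operators with `Λ_k² = −Id` and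
`Λ_k Λ_j = −Λ_j Λ_k` for `k ≠ j`.  Then for any `w` with `⟨w,w⟩_V = 1` there exists `w̃`
with `⟨w̃,w̃⟩_V = 1` and `⟨w̃, Λ_k w̃⟩_V = 0` for all `k`. -/
theorem stmt_16 {V : Type*} [AddCommGroup V] [Module ℝ V] [FiniteDimensional ℝ V]
    (B : V →ₗ[ℝ] V →ₗ[ℝ] ℝ)
    (hnd : ∀ x : V, (∀ y : V, B x y = 0) → x = 0)
    (hsymm : ∀ x y : V, B x y = B y x)
    (l : ℕ) (Λ : Fin l → Module.End ℝ V)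
    (hΛsym : ∀ (k : Fin l) (x y : V), B (Λ k x) y = B x (Λ k y))
    (hΛsq : ∀ k : Fin l, Λ k * Λ k = -1)
    (hΛanti : ∀ k j : Fin l, k ≠ j → Λ k * Λ j = -(Λ j * Λ k))
    (w : V) (hw : B w w = 1) :
    ∃ w' : V, B w' w' = 1 ∧ ∀ k : Fin l, B w' (Λ k w') = 0 :=
  stmt_16_general B l Λ hΛsym hΛsq hΛanti w hw
end
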